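/- arXiv:1410.7083 — 5 statements merged into one kernel-verified Lean document; each statement's English description precedes it below -/
import Mathlib

section
/- Let \|x\|^2 > 0, d \ge 0, a > 0 be real numbers with d^2 \ge 4\|x\|^2 a, and suppose d \le \gamma a for some \gamma > 0 (where here we abstract \mathfrak{d}[x] = d, \mathfrak{a}_0[x] = a). Then both real roots p_\pm = (-d \pm \sqrt{d^2 - 4\|x\|^2 a})/(2\|x\|^2) of the quadratic \lambda^2\|x\|^2 + \lambda d + a satisfy p_\pm < -1/\gamma. -/
/-!
The larger root `(-d + √Δ)/(2b)` lies below `t` exactly when `2bt + d > 0` and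
`Δ < (2bt + d)²`, and `(2bt + d)² - Δ = 4b·(bt² + dt + a)`. At `t = -1/γ` the hypothesis
`d ≤ γa` makes the quadratic positive, and together with `d² ≥ 4ba` it gives `dγ ≥ 4b`,
which puts `-1/γ` to the right of the vertex `-d/(2b)`.
-/

lemma quadratic_root_add_sqrt_lt {b d a t : ℝ} (hb : 0 < b) (hvertex : 0 < 2 * b * t + d)
    (hq : 0 < b * t ^ 2 + d * t + a) :
    (-d + Real.sqrt (discrim b d a)) / (2 * b) < t := by
  have hsqrt : Real.sqrt (discrim b d a) < 2 * b * t + d := by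
    rw [Real.sqrt_lt' hvertex, discrim]
    nlinarith
  rw [div_lt_iff₀ (by positivity)]
  linarith

lemma quadratic_root_sub_sqrt_le_add_sqrt (b d a : ℝ) (hb : 0 < b) :
    (-d - Real.sqrt (discrim b d a)) / (2 * b) ≤ (-d + Real.sqrt (discrim b d a)) / (2 * b) := by
  gcongr
  linarith [Real.sqrt_nonneg (discrim b d a)]

theorem stmt_1_general (b d a γ : ℝ) (hb : 0 < b) (hd : 0 ≤ d) (ha : 0 < a)
    (hdisc : d ^ 2 ≥ 4 * b * a) (hdγ : d ≤ γ * a) :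
    (-d + Real.sqrt (d ^ 2 - 4 * b * a)) / (2 * b) < -1 / γ ∧
    (-d - Real.sqrt (d ^ 2 - 4 * b * a)) / (2 * b) < -1 / γ := by
  have hd_pos : 0 < d := by nlinarith
  have hγ : 0 < γ := pos_of_mul_pos_left (hd_pos.trans_le hdγ) ha.le
  have hγd : 4 * b ≤ γ * d := le_of_mul_le_mul_right (by nlinarith) ha
  have hvertex : 0 < 2 * b * (-1 / γ) + d := by
    have hrw : 2 * b * (-1 / γ) + d = (γ * d - 2 * b) / γ := by field_simp; ring
    rw [hrw]
    exact div_pos (by linarith) hγ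
  have hq : 0 < b * (-1 / γ) ^ 2 + d * (-1 / γ) + a := by
    have hrw : b * (-1 / γ) ^ 2 + d * (-1 / γ) + a = b / γ ^ 2 + (γ * a - d) / γ := by
      field_simp; ring
    rw [hrw]
    exact add_pos_of_pos_of_nonneg (by positivity) (div_nonneg (sub_nonneg.2 hdγ) hγ.le)
  have hplus : (-d + Real.sqrt (discrim b d a)) / (2 * b) < -1 / γ :=
    quadratic_root_add_sqrt_lt hb hvertex hq
  exact ⟨hplus, (quadratic_root_sub_sqrt_le_add_sqrt b d a hb).trans_lt hplus⟩

/-- scalar core of Lemma 5.5: both real roots of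
`λ²b + λd + a` (with `b = ‖x‖² > 0`) are `< -1/γ`. -/
theorem stmt_1 (b d a γ : ℝ) (hb : 0 < b) (hd : 0 ≤ d) (ha : 0 < a)
    (hdisc : d ^ 2 ≥ 4 * b * a) (hγ : 0 < γ) (hdγ : d ≤ γ * a) :
    (-d + Real.sqrt (d ^ 2 - 4 * b * a)) / (2 * b) < -1 / γ ∧
    (-d - Real.sqrt (d ^ 2 - 4 * b * a)) / (2 * b) < -1 / γ :=
  stmt_1_general b d a γ hb hd ha hdisc hdγ
end

section
/- Let H be a Hilbert space, A_0 self-adjoint positive definite with 0 \in \rho(A_0), and D : H_{1/2} \to H_{-1/2} bounded nonnegative as above. If \|A_0^{-1/2} D A_0^{-1/2}\| > 2\|A_0^{-1/2}\| (operator norms on H), then there exists x \in H_{1/2}, x \ne 0, with \mathfrak{d}[x] \ge 2\|x\|\sqrt{\mathfrak{a}_0[x]}, i.e. \mathcal{D}^* \ne \emptyset. -/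
/-!
For a nonnegative self-adjoint `S` the norm is the supremum of the Rayleigh quotient
`re ⟪S y, y⟫ / ‖y‖ ^ 2`, so `‖S‖ > 2‖A₀^{-1/2}‖` yields some `y ≠ 0` with
`re ⟪S y, y⟫ > 2‖A₀^{-1/2}‖ ‖y‖² ≥ 2‖A₀^{-1/2} y‖ ‖y‖`.
-/

open RCLike

namespace ContinuousLinearMap

variable {𝕜 E : Type*} [RCLike 𝕜] [NormedAddCommGroup E] [InnerProductSpace 𝕜 E]

theorem exists_mul_norm_sq_lt_re_inner_of_lt_norm {T : E →L[𝕜] E}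
    (hT : (T : E →ₗ[𝕜] E).IsSymmetric) (hpos : ∀ x, 0 ≤ re (inner 𝕜 (T x) x))
    {c : ℝ} (hc : 0 ≤ c) (hcT : c < ‖T‖) :
    ∃ x ≠ 0, c * ‖x‖ ^ 2 < re (inner 𝕜 (T x) x) := by
  rw [T.norm_eq_iSup_rayleighQuotient hT] at hcT
  obtain ⟨x, hx⟩ := exists_lt_of_lt_ciSup hcT
  have hx0 : x ≠ 0 := by
    rintro rfl
    simp at hx
    linarith
  refine ⟨x, hx0, ?_⟩
  rwa [rayleighQuotient, reApplyInnerSelf_apply, abs_of_nonneg (by have := hpos x; positivity),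
    lt_div_iff₀ (by positivity)] at hx

end ContinuousLinearMap

theorem stmt_3_general {H : Type*} [NormedAddCommGroup H] [InnerProductSpace ℂ H] [CompleteSpace H]
    (Ainvhalf S : H →L[ℂ] H)
    (hSsa : IsSelfAdjoint S)
    (hSpos : ∀ y : H, 0 ≤ (inner ℂ (S y) y : ℂ).re)
    (hnorm : 2 * ‖Ainvhalf‖ < ‖S‖) :
    ∃ y : H, y ≠ 0 ∧ 2 * ‖Ainvhalf y‖ * Real.sqrt (‖y‖ ^ 2) ≤ (inner ℂ (S y) y : ℂ).re := by
  obtain ⟨y, hy, hSy⟩ := S.exists_mul_norm_sq_lt_re_inner_of_lt_norm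
    (S.isSelfAdjoint_iff_isSymmetric.mp hSsa) hSpos (by positivity) hnorm
  refine ⟨y, hy, ?_⟩
  calc 2 * ‖Ainvhalf y‖ * Real.sqrt (‖y‖ ^ 2) ≤ 2 * (‖Ainvhalf‖ * ‖y‖) * ‖y‖ := by
        rw [Real.sqrt_sq (norm_nonneg y)]
        gcongr
        exact Ainvhalf.le_opNorm y
    _ = 2 * ‖Ainvhalf‖ * ‖y‖ ^ 2 := by ring
    _ ≤ (inner ℂ (S y) y).re := hSy.le

/-- if `‖A₀^{-1/2} D A₀^{-1/2}‖ > 2‖A₀^{-1/2}‖` then `𝒟* ≠ ∅`,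
i.e. there is a nonzero `x = A₀^{-1/2} y ∈ H_{1/2}` with `𝔡[x] ≥ 2‖x‖√(𝔞₀[x])`. -/
theorem stmt_3 {H : Type*} [NormedAddCommGroup H] [InnerProductSpace ℂ H] [CompleteSpace H]
    (Ainvhalf S : H →L[ℂ] H)
    (hAsa : IsSelfAdjoint Ainvhalf)
    (hAinj : Function.Injective Ainvhalf)
    (hApos : ∀ y : H, y ≠ 0 → 0 < (inner ℂ (Ainvhalf y) y : ℂ).re)
    (hSsa : IsSelfAdjoint S)
    (hSpos : ∀ y : H, 0 ≤ (inner ℂ (S y) y : ℂ).re)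
    (hnorm : 2 * ‖Ainvhalf‖ < ‖S‖) :
    ∃ y : H, y ≠ 0 ∧ 2 * ‖Ainvhalf y‖ * Real.sqrt (‖y‖ ^ 2) ≤ (inner ℂ (S y) y : ℂ).re :=
  stmt_3_general Ainvhalf S hSsa hSpos hnorm
end

section
/- Let H be a Hilbert space and let \mathfrak{a}_0, \mathfrak{d} be as in assumptions (F1)-(F2) with \mathfrak{d}[x] \le \gamma\,\mathfrak{a}_0[x] for all x in the form domain, where \gamma > 0. Let \lambda \in \mathbb{C} with \mathrm{Re}\,\lambda \ge -1/\gamma, \mathrm{Re}(\lambda^2) \ge 0, and at least one of these two inequalities strict. Then for every x \ne 0 in the form domain, \mathrm{Re}\big(\lambda^2\|x\|^2 + \lambda\,\mathfrak{d}[x] + \mathfrak{a}_0[x]\big) > 0; in particular \mathfrak{t}(\lambda)[x] \ne 0. -/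
/-! Writing `Re 𝔱(λ)[x] = Re(λ²)‖x‖² + Re λ · 𝔡[x] + 𝔞₀[x]`, the first term is nonnegative and
`Re λ · 𝔡[x] + 𝔞₀[x] ≥ 𝔞₀[x] - 𝔡[x]/γ ≥ 0` because `0 ≤ 𝔡[x] ≤ γ 𝔞₀[x]`. If `Re(λ²) > 0` the first
term is positive; if `Re λ > -1/γ` the second is, since it equals `𝔞₀[x] > 0` when `𝔡[x] = 0`. -/

lemma neg_inv_mul_add_nonneg {γ a d : ℝ} (hγ : 0 < γ) (hd : d ≤ γ * a) :
    0 ≤ -1 / γ * d + a := by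
  have : -1 / γ * d + a = (γ * a - d) / γ := by field_simp; ring
  rw [this]
  exact div_nonneg (by linarith) hγ.le

lemma mul_add_nonneg_of_neg_inv_le {γ a d r : ℝ} (hγ : 0 < γ) (hd0 : 0 ≤ d) (hd : d ≤ γ * a)
    (hr : -1 / γ ≤ r) : 0 ≤ r * d + a := by
  have := mul_le_mul_of_nonneg_right hr hd0
  linarith [neg_inv_mul_add_nonneg hγ hd]

lemma mul_add_pos_of_neg_inv_lt {γ a d r : ℝ} (hγ : 0 < γ) (ha : 0 < a) (hd0 : 0 ≤ d)
    (hd : d ≤ γ * a) (hr : -1 / γ < r) : 0 < r * d + a := by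
  rcases hd0.eq_or_lt with rfl | hd_pos
  · simpa using ha
  · have := mul_lt_mul_of_pos_right hr hd_pos
    linarith [neg_inv_mul_add_nonneg hγ hd]

lemma re_quadratic_pencil (l : ℂ) (n d a : ℝ) :
    (l ^ 2 * (n : ℂ) ^ 2 + l * (d : ℂ) + (a : ℂ)).re = (l ^ 2).re * n ^ 2 + l.re * d + a := by
  simp [← Complex.ofReal_pow]

/-- core estimate of Proposition 4.9: for `Re λ ≥ -1/γ`, `Re(λ²) ≥ 0`,
one of them strict, one has `Re(𝔱(λ)[x]) > 0` for every nonzero `x` in the form domain;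
in particular `𝔱(λ)[x] ≠ 0`. -/
theorem stmt_4 {H : Type*} [NormedAddCommGroup H] [InnerProductSpace ℂ H]
    (Dm : Set H) (a0 d : H → ℝ) (γ : ℝ) (hγ : 0 < γ)
    (ha : ∀ x ∈ Dm, x ≠ 0 → 0 < a0 x)
    (hd : ∀ x ∈ Dm, 0 ≤ d x ∧ d x ≤ γ * a0 x)
    (l : ℂ) (h1 : -1 / γ ≤ l.re) (h2 : 0 ≤ (l ^ 2).re)
    (hstrict : -1 / γ < l.re ∨ 0 < (l ^ 2).re) :
    ∀ x ∈ Dm, x ≠ 0 →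
      0 < (l ^ 2 * (‖x‖ : ℂ) ^ 2 + l * (d x : ℂ) + (a0 x : ℂ)).re ∧
      l ^ 2 * (‖x‖ : ℂ) ^ 2 + l * (d x : ℂ) + (a0 x : ℂ) ≠ 0 := by
  intro x hx hx0
  obtain ⟨hd0, hdγ⟩ := hd x hx
  have ha0 := ha x hx hx0
  have hre_pos : 0 < (l ^ 2 * (‖x‖ : ℂ) ^ 2 + l * (d x : ℂ) + (a0 x : ℂ)).re := by
    rw [re_quadratic_pencil, add_assoc]
    rcases hstrict with hr | hsq
    · exact add_pos_of_nonneg_of_pos (by positivity)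
        (mul_add_pos_of_neg_inv_lt hγ ha0 hd0 hdγ hr)
    · exact add_pos_of_pos_of_nonneg (by positivity)
        (mul_add_nonneg_of_neg_inv_le hγ hd0 hdγ h1)
  refine ⟨hre_pos, fun h => ?_⟩
  rw [h, Complex.zero_re] at hre_pos
  exact hre_pos.false
end

section
/- Let H be a Hilbert space, A_0 self-adjoint with A_0 \ge c > 0 and 0 \in \rho(A_0), and D: H_{1/2} \to H_{-1/2} bounded nonnegative. Define the block operator \mathcal{A} = \begin{pmatrix} 0 & I \\ -A_0 & -D \end{pmatrix} on dom(\mathcal{A}) = \{(z,w) \in H_{1/2}\times H_{1/2} : A_0 z + Dw \in H\} in \mathcal{H} = H_{1/2}\times H. Then \mathcal{A} is boundedly invertible with inverse \mathcal{A}^{-1} = \begin{pmatrix} -A_0^{-1}D & -A_0^{-1} \\ I & 0\end{pmatrix} (where A_0^{-1}D acts in H_{1/2} and I is the embedding H_{1/2} \hookrightarrow H). -/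
/-! Both identities are pure algebra once `A₀ : H_{1/2} → H_{-1/2}` is known to be an
isomorphism: with `z = -A₀⁻¹(Du + v)` one gets `A₀z + Du = -v ∈ H`, and conversely
`A₀z + Dw = -h` gives `A₀⁻¹(Dw + h) = -z`. The inverse is bounded because it is built from
the bounded maps `A₀⁻¹`, `D`, the embedding `H ↪ H_{-1/2}` and the identity. -/

section BlockInverse

variable {R E F : Type*} [Ring R] [AddCommGroup E] [Module R E] [TopologicalSpace E]
  [AddCommGroup F] [Module R F] [TopologicalSpace F]

theorem ContinuousLinearEquiv.apply_neg_symm_add_add (A : E ≃L[R] F) (y x : F) :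
    A (-(A.symm (y + x))) + y = -x := by
  rw [map_neg, A.apply_symm_apply]
  abel

theorem ContinuousLinearEquiv.neg_symm_add_eq_of_eq_neg (A : E ≃L[R] F) {z : E} {y x : F}
    (hx : x = -(A z + y)) : -(A.symm (y + x)) = z := by
  rw [hx, show y + -(A z + y) = A (-z) by rw [map_neg]; abel, A.symm_apply_apply, neg_neg]

end BlockInverse

theorem ContinuousLinearEquiv.norm_symm_add_le {𝕜 E F G H : Type*} [NontriviallyNormedField 𝕜]
    [NormedAddCommGroup E] [NormedSpace 𝕜 E] [NormedAddCommGroup F] [NormedSpace 𝕜 F]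
    [NormedAddCommGroup G] [NormedSpace 𝕜 G] [NormedAddCommGroup H] [NormedSpace 𝕜 H]
    (A : E ≃L[𝕜] F) (D : G →L[𝕜] F) (j : H →L[𝕜] F) (u : G) (v : H) :
    ‖A.symm (D u + j v)‖ ≤ ‖(A.symm : F →L[𝕜] E)‖ * (‖D‖ + ‖j‖) * (‖u‖ + ‖v‖) :=
  calc ‖A.symm (D u + j v)‖
      ≤ ‖(A.symm : F →L[𝕜] E)‖ * (‖D‖ * ‖u‖ + ‖j‖ * ‖v‖) := by
        refine ((A.symm : F →L[𝕜] E).le_opNorm _).trans ?_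
        gcongr
        exact (norm_add_le _ _).trans (add_le_add (D.le_opNorm u) (j.le_opNorm v))
    _ ≤ ‖(A.symm : F →L[𝕜] E)‖ * ((‖D‖ + ‖j‖) * (‖u‖ + ‖v‖)) := by
        gcongr
        nlinarith [norm_nonneg D, norm_nonneg j, norm_nonneg u, norm_nonneg v]
    _ = _ := (mul_assoc _ _ _).symm

theorem stmt_14_general {Hh Hsp Hn : Type*}
    [NormedAddCommGroup Hh] [InnerProductSpace ℂ Hh]
    [NormedAddCommGroup Hsp] [InnerProductSpace ℂ Hsp]
    [NormedAddCommGroup Hn] [InnerProductSpace ℂ Hn]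
    (A0 : Hh ≃L[ℂ] Hn)
    (ι : Hh →L[ℂ] Hsp) (j : Hsp →L[ℂ] Hn)
    (D : Hh →L[ℂ] Hn) :
    -- `𝒜 ∘ 𝒜⁻¹ = I` on `𝓗 = H_{1/2} × H`: `𝒜⁻¹(u,v) = (-(A₀⁻¹(Du + jv)), u)` lies in
    -- `dom(𝒜)` and is mapped by `𝒜` back to `(u,v)`
    (∀ (u : Hh) (v : Hsp),
      (∃ h : Hsp, j h = A0 (-(A0.symm (D u + j v))) + D u) ∧
      A0 (-(A0.symm (D u + j v))) + D u = -(j v)) ∧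
    -- `𝒜⁻¹ ∘ 𝒜 = I` on `dom(𝒜)`
    (∀ z w : Hh, (∃ h : Hsp, j h = A0 z + D w) →
      ∀ h : Hsp, j h = -(A0 z + D w) → (-(A0.symm (D w + j h)), w) = (z, w)) ∧
    -- boundedness of the inverse in the norm of `𝓗 = H_{1/2} × H`
    (∃ M : ℝ, 0 ≤ M ∧ ∀ (u : Hh) (v : Hsp),
      ‖-(A0.symm (D u + j v))‖ + ‖ι u‖ ≤ M * (‖u‖ + ‖v‖)) := by
  refine ⟨fun u v => ?_, fun z w _ h hh => ?_, ?_⟩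
  · have hA := A0.apply_neg_symm_add_add (D u) (j v)
    exact ⟨⟨-v, by rw [map_neg, hA]⟩, hA⟩
  · rw [A0.neg_symm_add_eq_of_eq_neg hh]
  · refine ⟨‖(A0.symm : Hn →L[ℂ] Hh)‖ * (‖D‖ + ‖j‖) + ‖ι‖, by positivity, fun u v => ?_⟩
    calc ‖-(A0.symm (D u + j v))‖ + ‖ι u‖
        ≤ ‖(A0.symm : Hn →L[ℂ] Hh)‖ * (‖D‖ + ‖j‖) * (‖u‖ + ‖v‖) + ‖ι‖ * (‖u‖ + ‖v‖) := by
          rw [norm_neg]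
          gcongr
          · exact A0.norm_symm_add_le D j u v
          · exact (ι.le_opNorm u).trans (by gcongr; exact le_add_of_nonneg_right (norm_nonneg v))
      _ = _ := (add_mul _ _ _).symm

/-- the block operator `𝒜 = [[0, I], [-A₀, -D]]` on
`dom(𝒜) = {(z,w) ∈ H_{1/2} × H_{1/2} : A₀z + Dw ∈ H}` in `𝓗 = H_{1/2} × H` is
boundedly invertible with inverse `𝒜⁻¹ = [[-A₀⁻¹D, -A₀⁻¹], [I, 0]]`.
Setting: `Hh = H_{1/2}`, `Hsp = H`, `Hn = H_{-1/2}`; `ι : H_{1/2} ↪ H`,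
`j : H ↪ H_{-1/2}` the embeddings, `A0 : H_{1/2} ≃ H_{-1/2}` the isometric extension,
`P` the duality pairing of `H_{-1/2}` with `H_{1/2}` (restricting to the inner
product of `H`), `A₀ ≥ c > 0`, and `D` bounded nonnegative. -/
theorem stmt_14 {Hh Hsp Hn : Type*}
    [NormedAddCommGroup Hh] [InnerProductSpace ℂ Hh] [CompleteSpace Hh]
    [NormedAddCommGroup Hsp] [InnerProductSpace ℂ Hsp] [CompleteSpace Hsp]
    [NormedAddCommGroup Hn] [InnerProductSpace ℂ Hn] [CompleteSpace Hn]
    (A0 : Hh ≃L[ℂ] Hn) (hA0iso : ∀ z : Hh, ‖A0 z‖ = ‖z‖)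
    (ι : Hh →L[ℂ] Hsp) (j : Hsp →L[ℂ] Hn)
    (hι : Function.Injective ι) (hj : Function.Injective j)
    (P : Hn → Hh → ℂ)
    (hP : ∀ (h : Hsp) (y : Hh), P (j h) y = (inner ℂ (ι y) h : ℂ))
    (c : ℝ) (hc : 0 < c)
    (hA0pos : ∀ z : Hh, c * ‖z‖ ^ 2 ≤ (P (A0 z) z).re)
    (D : Hh →L[ℂ] Hn)
    (hDpos : ∀ z : Hh, 0 ≤ (P (D z) z).re) :
    -- `𝒜 ∘ 𝒜⁻¹ = I` on `𝓗 = H_{1/2} × H`: `𝒜⁻¹(u,v) = (-(A₀⁻¹(Du + jv)), u)` lies in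
    -- `dom(𝒜)` and is mapped by `𝒜` back to `(u,v)`
    (∀ (u : Hh) (v : Hsp),
      (∃ h : Hsp, j h = A0 (-(A0.symm (D u + j v))) + D u) ∧
      A0 (-(A0.symm (D u + j v))) + D u = -(j v)) ∧
    -- `𝒜⁻¹ ∘ 𝒜 = I` on `dom(𝒜)`
    (∀ z w : Hh, (∃ h : Hsp, j h = A0 z + D w) →
      ∀ h : Hsp, j h = -(A0 z + D w) → (-(A0.symm (D w + j h)), w) = (z, w)) ∧
    -- boundedness of the inverse in the norm of `𝓗 = H_{1/2} × H`
    (∃ M : ℝ, 0 ≤ M ∧ ∀ (u : Hh) (v : Hsp),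
      ‖-(A0.symm (D u + j v))‖ + ‖ι u‖ ≤ M * (‖u‖ + ‖v‖)) :=
  stmt_14_general A0 ι j D
end

section
/- Let \mathfrak{a}_0 and \mathfrak{d} satisfy (F1)-(F2) with \mathfrak{d} \ne 0, and let \gamma = \sup_{x\ne 0} \mathfrak{d}[x]/\mathfrak{a}_0[x] \in (0,\infty). Suppose \lambda is a real eigenvalue of the block operator \mathcal{A} (equivalently, \mathfrak{t}(\lambda)[x] = \lambda^2\|x\|^2 + \lambda\mathfrak{d}[x] + \mathfrak{a}_0[x] = 0 for some x \ne 0). Then \lambda < -1/\gamma. In particular, \mathcal{A} has no real eigenvalues in the interval [-1/\gamma, \infty). -/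
/-! For `λ ≥ 0` every term of `λ²‖x‖² + λ𝔡[x] + 𝔞₀[x]` is nonnegative and `𝔞₀[x] > 0`. For
`-1/γ ≤ λ < 0` the bound `𝔡[x] ≤ γ 𝔞₀[x]` gives `λ𝔡[x] ≥ λγ 𝔞₀[x] ≥ -𝔞₀[x]`, so the form is at
least `λ²‖x‖² > 0`. Either way it cannot vanish. -/

theorem sq_mul_add_mul_add_pos_of_neg_inv_le {n d a γ lam : ℝ} (hn : 0 < n) (hd : 0 ≤ d)
    (ha : 0 < a) (hγ : 0 < γ) (hdγ : d ≤ γ * a) (hlam : -1 / γ ≤ lam) :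
    0 < lam ^ 2 * n + lam * d + a := by
  rcases le_or_gt 0 lam with hlam_nonneg | hlam_neg
  · have : 0 ≤ lam ^ 2 * n + lam * d := by positivity
    linarith
  · have hlamγ : -1 ≤ lam * γ := by rwa [div_le_iff₀ hγ] at hlam
    have hdamp : 0 ≤ lam * d + a := by
      have := mul_le_mul_of_nonpos_left hdγ hlam_neg.le
      nlinarith
    have : 0 < lam ^ 2 * n := mul_pos (sq_pos_of_neg hlam_neg) hn
    linarith

theorem le_mul_of_isLUB_ratio {H : Type*} [Zero H] {Dm : Set H} {a0 d : H → ℝ} {γ : ℝ}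
    (hγ : IsLUB {r : ℝ | ∃ x ∈ Dm, x ≠ 0 ∧ r = d x / a0 x} γ) {x : H} (hx : x ∈ Dm)
    (hx0 : x ≠ 0) (ha0 : 0 < a0 x) : d x ≤ γ * a0 x :=
  (div_le_iff₀ ha0).mp (hγ.1 ⟨x, hx, hx0, rfl⟩)

theorem stmt_19_general {H : Type*} [NormedAddCommGroup H] [InnerProductSpace ℂ H]
    (Dm : Set H) (a0 d : H → ℝ) (c1 γ : ℝ) (hc1 : 0 < c1)
    (ha : ∀ x ∈ Dm, c1 * ‖x‖ ^ 2 ≤ a0 x)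
    (hdpos : ∀ x ∈ Dm, 0 ≤ d x)
    (hγpos : 0 < γ)
    (hγ : IsLUB {r : ℝ | ∃ x ∈ Dm, x ≠ 0 ∧ r = d x / a0 x} γ) :
    ∀ lam : ℝ, ∀ x ∈ Dm, x ≠ 0 →
      lam ^ 2 * ‖x‖ ^ 2 + lam * d x + a0 x = 0 → lam < -1 / γ := by
  intro lam x hx hx0 heq
  by_contra! hlam
  have hnorm : 0 < ‖x‖ ^ 2 := by positivity
  have ha0 : 0 < a0 x := (mul_pos hc1 hnorm).trans_le (ha x hx)
  have hpos := sq_mul_add_mul_add_pos_of_neg_inv_le hnorm (hdpos x hx) ha0 hγpos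
    (le_mul_of_isLUB_ratio hγ hx hx0 ha0) hlam
  exact hpos.ne' heq

/-- with (F1)-(F2), `𝔡 ≠ 0` and `γ = sup_{x≠0} 𝔡[x]/𝔞₀[x] ∈ (0,∞)`,
every real eigenvalue `λ` of `𝒜` (equivalently, every real `λ` with
`𝔱(λ)[x] = λ²‖x‖² + λ𝔡[x] + 𝔞₀[x] = 0` for some `x ≠ 0`) satisfies `λ < -1/γ`;
in particular there are no real eigenvalues in `[-1/γ, ∞)`. -/
theorem stmt_19 {H : Type*} [NormedAddCommGroup H] [InnerProductSpace ℂ H]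
    (Dm : Set H) (a0 d : H → ℝ) (c1 γ : ℝ) (hc1 : 0 < c1)
    (ha : ∀ x ∈ Dm, c1 * ‖x‖ ^ 2 ≤ a0 x)
    (hdpos : ∀ x ∈ Dm, 0 ≤ d x)
    (hdne : ∃ x ∈ Dm, d x ≠ 0)
    (hγpos : 0 < γ)
    (hγ : IsLUB {r : ℝ | ∃ x ∈ Dm, x ≠ 0 ∧ r = d x / a0 x} γ) :
    ∀ lam : ℝ, ∀ x ∈ Dm, x ≠ 0 →
      lam ^ 2 * ‖x‖ ^ 2 + lam * d x + a0 x = 0 → lam < -1 / γ :=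
  stmt_19_general Dm a0 d c1 γ hc1 ha hdpos hγpos hγ
end
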